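/- arXiv:0810.2207 — 2 statements merged into one kernel-verified Lean document; each statement's English description precedes it below -/
import Mathlib

section
/- Let Q be an LDP-polygon and let P be a centrally symmetric LDP-sub-parallelogram of Q, i.e. P is the convex hull of four vertices of Q, is a parallelogram with P = −P, and contains the origin in its interior. Then P is unimodularly equivalent to a parallelogram with vertices ±(1,0) and ±(p,q), where 0 ≤ p < q ≤ 4·o_Q² − 1. -/
open Pointwise

/-- The embedding of the lattice `ℤ²` into `ℚ²`. -/
def toQ (p : ℤ × ℤ) : ℚ × ℚ := ((p.1 : ℚ), (p.2 : ℚ))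

/-- The pairing between the dual lattice `ℤ²` and `ℚ²`. -/
def pairQ (η : ℤ × ℤ) (x : ℚ × ℚ) : ℚ := (η.1 : ℚ) * x.1 + (η.2 : ℚ) * x.2

/-- A lattice polygon: the convex hull of finitely many lattice points,
with nonempty interior. -/
def IsLatticePolygon (Q : Set (ℚ × ℚ)) : Prop :=
  (∃ S : Finset (ℤ × ℤ), Q = convexHull ℚ (toQ '' (S : Set (ℤ × ℤ)))) ∧
    (interior Q).Nonempty

/-- An IP-polygon: a lattice polygon containing the origin in its interior. -/
def IsIPPolygon (Q : Set (ℚ × ℚ)) : Prop :=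
  IsLatticePolygon Q ∧ (0 : ℚ × ℚ) ∈ interior Q

/-- The vertices of a polygon are its extreme points. -/
def vertices (Q : Set (ℚ × ℚ)) : Set (ℚ × ℚ) := Set.extremePoints ℚ Q

/-- An LDP-polygon: an IP-polygon all of whose vertices are primitive lattice points. -/
def IsLDPPolygon (Q : Set (ℚ × ℚ)) : Prop :=
  IsIPPolygon Q ∧ ∀ v ∈ vertices Q, ∃ p : ℤ × ℤ, Int.gcd p.1 p.2 = 1 ∧ v = toQ p

/-- `IsFacetWith Q η l F` : `F` is a facet (edge) of `Q` with primitive outer normal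
`η` and local index `l`, i.e. `⟨η, x⟩ = l` on `F` and `⟨η, y⟩ ≤ l` on `Q`. -/
def IsFacetWith (Q : Set (ℚ × ℚ)) (η : ℤ × ℤ) (l : ℤ) (F : Set (ℚ × ℚ)) : Prop :=
  Int.gcd η.1 η.2 = 1 ∧ 0 < l ∧
  (∀ y ∈ Q, pairQ η y ≤ (l : ℚ)) ∧
  F = {x ∈ Q | pairQ η x = (l : ℚ)} ∧
  ∃ x ∈ F, ∃ y ∈ F, x ≠ y

/-- `F` is a facet of `Q`. -/
def IsFacet (Q F : Set (ℚ × ℚ)) : Prop := ∃ η l, IsFacetWith Q η l F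

/-- `HasMaxLocalIndex Q k` : the maximal local index `m_Q` of `Q` equals `k`. -/
def HasMaxLocalIndex (Q : Set (ℚ × ℚ)) (k : ℤ) : Prop :=
  (∃ F η, IsFacetWith Q η k F) ∧ ∀ F η l, IsFacetWith Q η l F → l ≤ k

/-- `HasIndex Q ℓ` : the index `ℓ_Q` of `Q` (the lcm of all local indices) equals `ℓ`. -/
def HasIndex (Q : Set (ℚ × ℚ)) (ℓ : ℤ) : Prop :=
  0 < ℓ ∧ (∀ F η l, IsFacetWith Q η l F → l ∣ ℓ) ∧
  ∀ m : ℤ, 0 < m → (∀ F η l, IsFacetWith Q η l F → l ∣ m) → ℓ ∣ m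

/-- The only lattice point in the interior of `(1/k)·Q` is the origin. -/
def NoIntLatticePts (Q : Set (ℚ × ℚ)) (k : ℤ) : Prop :=
  ∀ p : ℤ × ℤ, toQ p ∈ interior (((k : ℚ)⁻¹) • Q) → p = 0

/-- `HasOrder Q I` : the order `o_Q` of `Q` equals `I`. -/
def HasOrder (Q : Set (ℚ × ℚ)) (I : ℤ) : Prop :=
  1 ≤ I ∧ NoIntLatticePts Q I ∧ ∀ k : ℤ, 1 ≤ k → NoIntLatticePts Q k → I ≤ k

/-- The cone `pos(F) = ℝ≥0·F` spanned by `F` (inside `ℚ²`). -/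
def posCone (F : Set (ℚ × ℚ)) : Set (ℚ × ℚ) :=
  {y | ∃ t : ℚ, 0 ≤ t ∧ ∃ z ∈ F, y = t • z}

/-- The number of lattice points in a subset of `ℚ²`. -/
noncomputable def latticeCount (S : Set (ℚ × ℚ)) : ℕ :=
  {p : ℤ × ℤ | toQ p ∈ S}.ncard

/-- The normalised volume of `Q`: twice the Euclidean area of the corresponding
real region. -/
noncomputable def nVol (Q : Set (ℚ × ℚ)) : ℝ :=
  2 * (MeasureTheory.volume
    (closure ((fun x : ℚ × ℚ => ((x.1 : ℝ), (x.2 : ℝ))) '' Q))).toReal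

/-- Unimodular equivalence: `Q'` is the image of `Q` under an element of `GL(2,ℤ)`. -/
def UnimodEquiv (Q Q' : Set (ℚ × ℚ)) : Prop :=
  ∃ a b c d : ℤ, (a * d - b * c = 1 ∨ a * d - b * c = -1) ∧
    (fun x : ℚ × ℚ => ((a : ℚ) * x.1 + (b : ℚ) * x.2,
      (c : ℚ) * x.1 + (d : ℚ) * x.2)) '' Q = Q'

/-!
Write `v = a` and `w = ±b` with `a, b` primitive and `q = det (a, b) > 0`. Completing `a` to a
basis `a, u` of `ℤ²` gives `b = p a + q u` with `0 ≤ p < q` (Hermite normal form), and the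
inverse of the matrix `(a u)` maps `conv {±a, ±b}` onto `conv {±(1,0), ±(p,q)}`.
If `q ≥ 4 I²`, Dirichlet's theorem gives `1 ≤ k < 2I` and `j` with `|k p - j q| ≤ q / 2I`.
The nonzero lattice point `j a + k u` has coordinates `(j - k p / q, k / q)` in the basis
`a, b`, whose `ℓ¹`-norm is `< 1 / I`, so it lies in the interior of `(1/I) P ⊆ (1/I) Q`.
-/

def cross {R : Type*} [CommRing R] (x y : R × R) : R := x.1 * y.2 - x.2 * y.1

theorem cross_toQ (x y : ℤ × ℤ) : cross (toQ x) (toQ y) = cross x y := by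
  simp [cross, toQ]

theorem toQ_neg (x : ℤ × ℤ) : toQ (-x) = -toQ x := by
  simp [toQ]

theorem toQ_smul (c : ℤ) (x : ℤ × ℤ) : toQ (c • x) = (c : ℚ) • toQ x := by
  simp [toQ]

theorem cross_smul_eq_add {R : Type*} [CommRing R] (x y z : R × R) :
    cross x y • z = cross z y • x + cross x z • y := by
  ext <;> simp only [cross, Prod.smul_fst, Prod.smul_snd, Prod.fst_add, Prod.snd_add,
    smul_eq_mul] <;> ring

section Convex

variable {𝕜 E : Type*} [Field 𝕜] [LinearOrder 𝕜] [IsStrictOrderedRing 𝕜]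
  [AddCommGroup E] [Module 𝕜 E] {K : Set E}

theorem Convex.smul_mem_of_abs_le_one (hK : Convex 𝕜 K) {x : E} (hx : x ∈ K) (hx' : -x ∈ K)
    {s : 𝕜} (hs : |s| ≤ 1) : s • x ∈ K := by
  obtain ⟨h₁, h₂⟩ := abs_le.1 hs
  convert hK hx hx' (by linarith : (0 : 𝕜) ≤ (1 + s) / 2) (by linarith : (0 : 𝕜) ≤ (1 - s) / 2)
    (by ring) using 1
  rw [smul_neg, ← sub_eq_add_neg, ← sub_smul]
  ring_nf

theorem Convex.add_mem_of_abs_add_abs_le_one (hK : Convex 𝕜 K) {x y : E}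
    (hx : x ∈ K) (hx' : -x ∈ K) (hy : y ∈ K) (hy' : -y ∈ K) {α β : 𝕜} (h : |α| + |β| ≤ 1) :
    α • x + β • y ∈ K := by
  have hβ : |β| ≤ 1 - |α| := by linarith
  have hαx : (α / |α|) • x ∈ K :=
    hK.smul_mem_of_abs_le_one hx hx' (by rw [abs_div, abs_abs]; exact div_self_le_one _)
  have hβy : (β / (1 - |α|)) • y ∈ K :=
    hK.smul_mem_of_abs_le_one hy hy' (by
      rw [abs_div, abs_of_nonneg ((abs_nonneg β).trans hβ)]
      exact div_le_one_of_le₀ hβ ((abs_nonneg β).trans hβ))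
  convert hK hαx hβy (abs_nonneg α) ((abs_nonneg β).trans hβ) (by ring) using 1
  rw [smul_smul, smul_smul, ← mul_div_assoc, ← mul_div_assoc,
    mul_div_cancel_left_of_imp fun h => abs_eq_zero.1 h,
    mul_div_cancel_left_of_imp fun h => abs_nonpos_iff.1 (h ▸ hβ)]

end Convex

/-- By Cramer's rule, `z` has coordinates `cross z y / cross x y` and `cross x z / cross x y`
in the basis `x, y`; the hypothesis describes an open `ℓ¹`-ball in these coordinates. -/
theorem mem_interior_of_abs_cross_add_abs_cross_lt {K : Set (ℚ × ℚ)} (hK : Convex ℚ K)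
    {x y : ℚ × ℚ} (hx : x ∈ K) (hx' : -x ∈ K) (hy : y ∈ K) (hy' : -y ∈ K) {z : ℚ × ℚ}
    (hz : |cross z y| + |cross x z| < |cross x y|) : z ∈ interior K := by
  have hxy : 0 < |cross x y| := (add_nonneg (abs_nonneg _) (abs_nonneg _)).trans_lt hz
  refine interior_maximal (t := {z | |cross z y| + |cross x z| < |cross x y|}) ?_
    (isOpen_lt (by unfold cross; fun_prop) continuous_const) hz
  intro z' hz'
  have hmem := hK.add_mem_of_abs_add_abs_le_one hx hx' hy hy'
    (α := cross z' y / cross x y) (β := cross x z' / cross x y)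
    (by rw [abs_div, abs_div, ← add_div]; exact (div_le_one hxy).2 hz'.le)
  rwa [div_eq_inv_mul, div_eq_inv_mul, mul_smul, mul_smul, ← smul_add, ← cross_smul_eq_add,
    inv_smul_smul₀ (abs_pos.1 hxy)] at hmem

theorem eq_or_eq_neg_of_cross_eq_zero {a b : ℤ × ℤ} (ha : Int.gcd a.1 a.2 = 1)
    (hb : Int.gcd b.1 b.2 = 1) (h : cross a b = 0) : b = a ∨ b = -a := by
  obtain ⟨s, t, hst⟩ := Int.isCoprime_iff_gcd_eq_one.2 ha
  have hba : b = (s * b.1 + t * b.2) • a := by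
    unfold cross at h
    ext <;> simp only [Prod.smul_fst, Prod.smul_snd, smul_eq_mul]
    · linear_combination (-b.1) * hst - t * h
    · linear_combination (-b.2) * hst + s * h
  generalize s * b.1 + t * b.2 = l at hba
  subst hba
  have hunit : l.natAbs = 1 := by simpa [Int.gcd_mul_left, ha] using hb
  rcases Int.natAbs_eq_iff.1 hunit with rfl | rfl <;> simp

theorem exists_hermite_normal_form {a b : ℤ × ℤ} (ha : Int.gcd a.1 a.2 = 1)
    (hq : 0 < cross a b) :
    ∃ (p : ℤ) (u : ℤ × ℤ), 0 ≤ p ∧ p < cross a b ∧ cross a u = 1 ∧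
      b = p • a + cross a b • u := by
  obtain ⟨s, t, hst⟩ := Int.isCoprime_iff_gcd_eq_one.2 ha
  -- `a, (-t, s)` is a basis of `ℤ²`, in which `b` has coordinates `(s b₁ + t b₂, cross a b)`.
  have hdiv := Int.mul_ediv_add_emod (s * b.1 + t * b.2) (cross a b)
  refine ⟨(s * b.1 + t * b.2) % cross a b, (-t, s) + ((s * b.1 + t * b.2) / cross a b) • a,
    Int.emod_nonneg _ hq.ne', Int.emod_lt_of_pos _ hq, ?_, ?_⟩
  · simp only [cross, Prod.fst_add, Prod.snd_add, Prod.smul_fst, Prod.smul_snd, smul_eq_mul]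
    linear_combination hst
  · generalize (s * b.1 + t * b.2) / cross a b = c, (s * b.1 + t * b.2) % cross a b = p at hdiv
    unfold cross at hdiv ⊢
    ext <;> simp only [Prod.fst_add, Prod.snd_add, Prod.smul_fst, Prod.smul_snd, smul_eq_mul]
    · linear_combination (-b.1) * hst - a.1 * hdiv
    · linear_combination (-b.2) * hst - a.2 * hdiv

theorem Int.exists_abs_mul_sub_mul_mul_le (p : ℤ) {q n : ℤ} (hq : 0 < q) (hn : 0 < n) :
    ∃ j k : ℤ, 0 < k ∧ k ≤ n ∧ |k * p - j * q| * (n + 1) ≤ q := by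
  obtain ⟨j, k, hk, hkn, h⟩ :=
    Real.exists_int_int_abs_mul_sub_le ((p : ℝ) / q) (n := n.toNat) (by omega)
  refine ⟨j, k, hk, by omega, ?_⟩
  have hqR : (0 : ℝ) < q := by exact_mod_cast hq
  have hnR : ((n.toNat : ℕ) : ℝ) = n := by exact_mod_cast Int.toNat_of_nonneg hn.le
  rw [hnR, le_div_iff₀ (by positivity)] at h
  have hsplit : (k : ℝ) * p - j * q = (k * ((p : ℝ) / q) - j) * q := by field_simp
  have key : |(k : ℝ) * p - j * q| * (n + 1) ≤ q := by
    calc |(k : ℝ) * p - j * q| * (n + 1) = |k * ((p : ℝ) / q) - j| * (n + 1) * q := by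
          rw [hsplit, abs_mul, abs_of_pos hqR]; ring
      _ ≤ 1 * q := by gcongr
      _ = q := one_mul _
  exact_mod_cast key

theorem le_four_mul_sq_sub_one_of_noIntLatticePts {Q : Set (ℚ × ℚ)} (hQ : Convex ℚ Q)
    {I : ℤ} (hI : 1 ≤ I) (hQI : NoIntLatticePts Q I) {a b u : ℤ × ℤ} {p q : ℤ}
    (hau : cross a u = 1) (hb : b = p • a + q • u) (hq : 0 < q)
    (ha : toQ a ∈ Q) (ha' : -toQ a ∈ Q) (hbQ : toQ b ∈ Q) (hbQ' : -toQ b ∈ Q) :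
    q ≤ 4 * I ^ 2 - 1 := by
  by_contra! hqI
  obtain ⟨j, k, hk, hkI, hjk⟩ :=
    Int.exists_abs_mul_sub_mul_mul_le p hq (n := 2 * I - 1) (by omega)
  have hIQ : (I : ℚ) ≠ 0 := by exact_mod_cast (by omega : I ≠ 0)
  have hZ : cross a (j • a + k • u) = k := by
    simp only [cross, Prod.fst_add, Prod.snd_add, Prod.smul_fst, Prod.smul_snd,
      smul_eq_mul] at hau ⊢
    linear_combination k * hau
  have hZ0 : j • a + k • u ≠ 0 := fun h => by
    rw [h] at hZ
    simp [cross] at hZ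
    omega
  refine hZ0 (hQI _ ?_)
  rw [interior_smul₀ (inv_ne_zero hIQ), Set.mem_inv_smul_set_iff₀ hIQ, ← toQ_smul]
  apply mem_interior_of_abs_cross_add_abs_cross_lt hQ ha ha' hbQ hbQ'
  have hZb : cross (I • (j • a + k • u)) b = I * (j * q - k * p) := by
    subst hb
    simp only [cross, Prod.fst_add, Prod.snd_add, Prod.smul_fst, Prod.smul_snd,
      smul_eq_mul] at hau ⊢
    linear_combination I * (j * q - k * p) * hau
  have haZ : cross a (I • (j • a + k • u)) = I * k := by
    simp only [cross, Prod.smul_fst, Prod.smul_snd, smul_eq_mul] at hZ ⊢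
    linear_combination I * hZ
  have hab : cross a b = q := by
    subst hb
    simp only [cross, Prod.fst_add, Prod.snd_add, Prod.smul_fst, Prod.smul_snd,
      smul_eq_mul] at hau ⊢
    linear_combination q * hau
  rw [cross_toQ, cross_toQ, cross_toQ, hZb, haZ, hab]
  have hIk : I * k ≤ I * (2 * I - 1) := mul_le_mul_of_nonneg_left hkI (by omega)
  rw [abs_sub_comm, sub_add_cancel] at hjk
  have hsum : |I * (j * q - k * p)| + |I * k| < |q| := by
    rw [abs_mul, abs_mul, abs_of_pos (by omega : 0 < I), abs_of_pos hk, abs_of_pos hq]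
    nlinarith
  exact_mod_cast hsum

def intMatrixLinearMap (a b c d : ℤ) : ℚ × ℚ →ₗ[ℚ] ℚ × ℚ where
  toFun x := ((a : ℚ) * x.1 + (b : ℚ) * x.2, (c : ℚ) * x.1 + (d : ℚ) * x.2)
  map_add' x y := by ext <;> simp only [Prod.fst_add, Prod.snd_add] <;> ring
  map_smul' r x := by
    ext <;> simp only [Prod.smul_fst, Prod.smul_snd, smul_eq_mul, RingHom.id_apply] <;> ring

theorem unimodEquiv_convexHull_of_cross_eq_one {a u : ℤ × ℤ} (hau : cross a u = 1) (p q : ℤ) :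
    UnimodEquiv (convexHull ℚ {toQ a, toQ (p • a + q • u), -toQ a, -toQ (p • a + q • u)})
      (convexHull ℚ {toQ (1, 0), toQ (-1, 0), toQ (p, q), toQ (-p, -q)}) := by
  have hmap (x y : ℤ) :
      intMatrixLinearMap u.2 (-u.1) (-a.2) a.1 (toQ (x • a + y • u)) = toQ (x, y) := by
    have hauQ : (a.1 : ℚ) * u.2 - a.2 * u.1 = 1 := by exact_mod_cast hau
    simp only [intMatrixLinearMap, LinearMap.coe_mk, AddHom.coe_mk, toQ, Prod.fst_add,
      Prod.snd_add, Prod.smul_fst, Prod.smul_snd, smul_eq_mul]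
    ext <;> push_cast
    · linear_combination (x : ℚ) * hauQ
    · linear_combination (y : ℚ) * hauQ
  -- the inverse of the matrix with columns `a, u`
  refine ⟨u.2, -u.1, -a.2, a.1, Or.inl (by unfold cross at hau; linear_combination hau), ?_⟩
  change intMatrixLinearMap u.2 (-u.1) (-a.2) a.1 '' _ = _
  have ha := hmap 1 0
  rw [one_smul, zero_smul, add_zero] at ha
  rw [LinearMap.image_convexHull, Set.image_insert_eq, Set.image_insert_eq, Set.image_insert_eq,
    Set.image_singleton, map_neg, map_neg, ha, hmap, ← toQ_neg, ← toQ_neg, Prod.neg_mk,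
    Prod.neg_mk, neg_zero, Set.insert_comm (toQ (p, q))]

theorem exists_normal_form_of_cross_pos {Q : Set (ℚ × ℚ)} (hQ : Convex ℚ Q) {I : ℤ} (hI : 1 ≤ I)
    (hQI : NoIntLatticePts Q I) {a b : ℤ × ℤ} (ha : Int.gcd a.1 a.2 = 1) (hab : 0 < cross a b)
    (hsub : {toQ a, toQ b, -toQ a, -toQ b} ⊆ Q) :
    ∃ p q : ℤ, 0 ≤ p ∧ p < q ∧ q ≤ 4 * I ^ 2 - 1 ∧
      UnimodEquiv (convexHull ℚ {toQ a, toQ b, -toQ a, -toQ b})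
        (convexHull ℚ {toQ (1, 0), toQ (-1, 0), toQ (p, q), toQ (-p, -q)}) := by
  obtain ⟨p, u, hp, hpq, hau, hb⟩ := exists_hermite_normal_form ha hab
  generalize cross a b = q at hab hpq hb
  refine ⟨p, q, hp, hpq, le_four_mul_sq_sub_one_of_noIntLatticePts hQ hI hQI hau hb hab
    (hsub (by simp)) (hsub (by simp)) (hsub (by simp)) (hsub (by simp)), ?_⟩
  subst hb
  exact unimodEquiv_convexHull_of_cross_eq_one hau p q

theorem exists_normal_form_of_cross_ne_zero {Q : Set (ℚ × ℚ)} (hQ : Convex ℚ Q) {I : ℤ}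
    (hI : 1 ≤ I) (hQI : NoIntLatticePts Q I) {a b : ℤ × ℤ} (ha : Int.gcd a.1 a.2 = 1)
    (hab : cross a b ≠ 0) (hsub : {toQ a, toQ b, -toQ a, -toQ b} ⊆ Q) :
    ∃ p q : ℤ, 0 ≤ p ∧ p < q ∧ q ≤ 4 * I ^ 2 - 1 ∧
      UnimodEquiv (convexHull ℚ {toQ a, toQ b, -toQ a, -toQ b})
        (convexHull ℚ {toQ (1, 0), toQ (-1, 0), toQ (p, q), toQ (-p, -q)}) := by
  rcases hab.lt_or_gt with hneg | hpos
  · have hset : ({toQ a, toQ b, -toQ a, -toQ b} : Set (ℚ × ℚ)) =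
        {toQ a, toQ (-b), -toQ a, -toQ (-b)} := by
      rw [toQ_neg, neg_neg]
      ext
      simp only [Set.mem_insert_iff, Set.mem_singleton_iff]
      tauto
    rw [hset] at hsub ⊢
    refine exists_normal_form_of_cross_pos hQ hI hQI ha ?_ hsub
    simp only [cross, Prod.fst_neg, Prod.snd_neg] at hneg ⊢
    linarith
  · exact exists_normal_form_of_cross_pos hQ hI hQI ha hpos hsub

theorem ldp_sub_parallelogram_normal_form_general
    (Q P : Set (ℚ × ℚ)) (I : ℤ) (hQ : IsLDPPolygon Q) (hI : HasOrder Q I)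
    (v w : ℚ × ℚ) (hv : v ∈ vertices Q) (hw : w ∈ vertices Q)
    (hv' : -v ∈ vertices Q) (hw' : -w ∈ vertices Q)
    (hP : P = convexHull ℚ {v, w, -v, -w})
    (hdist : v ≠ w ∧ v ≠ -w ∧ v ≠ -v ∧ w ≠ -w) :
    ∃ p q : ℤ, 0 ≤ p ∧ p < q ∧ q ≤ 4 * I ^ 2 - 1 ∧
      UnimodEquiv P (convexHull ℚ
        {toQ (1, 0), toQ (-1, 0), toQ (p, q), toQ (-p, -q)}) := by
  obtain ⟨⟨⟨⟨S, hS⟩, -⟩, -⟩, hprim⟩ := hQ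
  have hsub : ({v, w, -v, -w} : Set (ℚ × ℚ)) ⊆ Q := by
    simp only [Set.insert_subset_iff, Set.singleton_subset_iff]
    exact ⟨extremePoints_subset hv, extremePoints_subset hw, extremePoints_subset hv',
      extremePoints_subset hw'⟩
  obtain ⟨a, ha, rfl⟩ := hprim v hv
  obtain ⟨b, hb, rfl⟩ := hprim w hw
  have hab : cross a b ≠ 0 := fun h => by
    rcases eq_or_eq_neg_of_cross_eq_zero ha hb h with rfl | rfl
    exacts [hdist.1 rfl, hdist.2.1 (by rw [toQ_neg, neg_neg])]
  subst hP
  exact exists_normal_form_of_cross_ne_zero (hS ▸ convex_convexHull ℚ _) hI.1 hI.2.1 ha hab hsub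

/-- Any centrally symmetric LDP-sub-parallelogram `P` of an LDP-polygon `Q` of order
`I` is unimodularly equivalent to a parallelogram with vertices `±(1,0)` and
`±(p,q)`, where `0 ≤ p < q ≤ 4I² − 1`. -/
theorem ldp_sub_parallelogram_normal_form
    (Q P : Set (ℚ × ℚ)) (I : ℤ) (hQ : IsLDPPolygon Q) (hI : HasOrder Q I)
    (v w : ℚ × ℚ) (hv : v ∈ vertices Q) (hw : w ∈ vertices Q)
    (hv' : -v ∈ vertices Q) (hw' : -w ∈ vertices Q)
    (hP : P = convexHull ℚ {v, w, -v, -w})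
    (hvert : {v, w, -v, -w} ⊆ vertices P)
    (hdist : v ≠ w ∧ v ≠ -w ∧ v ≠ -v ∧ w ≠ -w)
    (hsym : P = -P)
    (h0 : (0 : ℚ × ℚ) ∈ interior P) :
    ∃ p q : ℤ, 0 ≤ p ∧ p < q ∧ q ≤ 4 * I ^ 2 - 1 ∧
      UnimodEquiv P (convexHull ℚ
        {toQ (1, 0), toQ (-1, 0), toQ (p, q), toQ (-p, -q)}) :=
  ldp_sub_parallelogram_normal_form_general Q P I hQ hI v w hv hw hv' hw' hP hdist
end

section
/- Let Q be an LDP-polygon with index ℓ_Q and let F be a facet of Q with local index l_F. Then |F ∩ ℤ²| ≤ 2·ℓ_Q·(l_F + 1) + 1. Moreover, if F = conv{(a, l_F), (b, l_F)} with −l_F < a ≤ 0 < b, then Q ⊂ {(x,y) ∈ ℚ² : −l_F·x + (ℓ_Q + a)·y ≤ l_F·ℓ_Q and l_F·x + (ℓ_Q − b)·y ≤ l_F·ℓ_Q}. -/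
open Pointwise

/-! After a unimodular change of coordinates the facet `F` lies on the line `y = l` and `Q` lies
below it. At each lattice endpoint of `F` the neighbouring edge of `Q` has a primitive normal
`(p, q)` with `p ≠ 0` and local index `k ≤ ℓ` (as `k ∣ ℓ`); scaling its supporting inequality by
`l / |p|` and using `y ≤ l` yields the two stated half-planes. As `0` is interior, `Q` contains a
lattice point with `y ≤ -1`, and adding the two inequalities there bounds the lattice length of
`F` by `2ℓ(l + 1)`. -/

open Topology

def pairZ (η s : ℤ × ℤ) : ℤ := η.1 * s.1 + η.2 * s.2

@[simp] lemma pairQ_toQ (η s : ℤ × ℤ) : pairQ η (toQ s) = pairZ η s := by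
  simp [pairQ, toQ, pairZ]

lemma toQ_injective : Function.Injective toQ := fun p q h => by
  simp only [toQ, Prod.mk.injEq, Int.cast_inj] at h
  exact Prod.ext h.1 h.2

def pairQLin (η : ℤ × ℤ) : ℚ × ℚ →ₗ[ℚ] ℚ :=
  (η.1 : ℚ) • LinearMap.fst ℚ ℚ ℚ + (η.2 : ℚ) • LinearMap.snd ℚ ℚ ℚ

lemma pairQ_le_of_mem_convexHull {A : Set (ℚ × ℚ)} {η : ℤ × ℤ} {c : ℚ}
    (h : ∀ y ∈ A, pairQ η y ≤ c) {x : ℚ × ℚ} (hx : x ∈ convexHull ℚ A) : pairQ η x ≤ c :=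
  convexHull_min h (convex_halfSpace_le (pairQLin η).isLinear c) hx

lemma exists_lt_pairZ_of_mem_convexHull {S : Finset (ℤ × ℤ)} {η : ℤ × ℤ} {c : ℚ}
    {x : ℚ × ℚ} (hx : x ∈ convexHull ℚ (toQ '' ↑S)) (hc : c < pairQ η x) :
    ∃ s ∈ S, c < pairZ η s := by
  by_contra! h
  exact hc.not_ge (pairQ_le_of_mem_convexHull (by rintro _ ⟨s, hs, rfl⟩; simpa using h s hs) hx)

-- What is used of `0 ∈ interior Q`; unlike the interior, it transports along `frameMap` by algebra.
def MeetsOpenHalfplanes (Q : Set (ℚ × ℚ)) : Prop :=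
  ∀ n : ℤ × ℤ, n ≠ 0 → ∃ x ∈ Q, 0 < pairQ n x

lemma meetsOpenHalfplanes_of_zero_mem_interior {Q : Set (ℚ × ℚ)}
    (h : (0 : ℚ × ℚ) ∈ interior Q) : MeetsOpenHalfplanes Q := by
  intro n hn
  have hray : ∀ᶠ t : ℚ in 𝓝 0, t • toQ n ∈ Q :=
    ((continuous_id.smul continuous_const).tendsto' 0 0 (zero_smul ℚ _)).eventually
      (mem_interior_iff_mem_nhds.mp h)
  obtain ⟨t, htQ, ht⟩ := ((hray.filter_mono nhdsWithin_le_nhds).and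
    (self_mem_nhdsWithin : Set.Ioi (0 : ℚ) ∈ 𝓝[>] 0)).exists
  have hnorm : 0 < pairZ n n :=
    lt_of_le_of_ne (add_nonneg (mul_self_nonneg _) (mul_self_nonneg _)) fun h =>
      hn (Prod.ext_iff.mpr (mul_self_add_mul_self_eq_zero.mp h.symm))
  refine ⟨t • toQ n, htQ, ?_⟩
  rw [show pairQ n (t • toQ n) = t * pairZ n n by simp [pairQ, toQ, pairZ]; ring]
  exact mul_pos ht (by exact_mod_cast hnorm)

def LocalIndexLE (Q : Set (ℚ × ℚ)) (ℓ : ℤ) : Prop :=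
  ∀ F η l, IsFacetWith Q η l F → l ≤ ℓ

-- `s₀` minimises the slope of the segment from `(c, l)` down to the points of `S` below the line.
lemma exists_support_at_left_end (S : Finset (ℤ × ℤ)) {c l : ℤ} (htop : ∀ s ∈ S, s.2 ≤ l)
    (hline : ∀ s ∈ S, s.2 = l → c ≤ s.1) (hlow : ∃ s ∈ S, s.2 < l) :
    ∃ s₀ ∈ S, s₀.2 < l ∧
      ∀ s ∈ S, pairZ (s₀.2 - l, c - s₀.1) s ≤ pairZ (s₀.2 - l, c - s₀.1) (c, l) := by
  obtain ⟨s₀, hs₀, hmin⟩ := (S.filter (·.2 < l)).exists_min_image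
    (fun s => ((s.1 - c : ℤ) : ℚ) / (l - s.2 : ℤ))
    (let ⟨s, hs, h⟩ := hlow; ⟨s, Finset.mem_filter.mpr ⟨hs, h⟩⟩)
  rw [Finset.mem_filter] at hs₀
  refine ⟨s₀, hs₀.1, hs₀.2, fun s hs => ?_⟩
  simp only [pairZ]
  rcases (htop s hs).lt_or_eq with hlt | heq
  · have h := hmin s (Finset.mem_filter.mpr ⟨hs, hlt⟩)
    rw [div_le_div_iff₀ (by exact_mod_cast sub_pos.2 hs₀.2) (by exact_mod_cast sub_pos.2 hlt)] at h
    have : (s₀.1 - c) * (l - s.2) ≤ (s.1 - c) * (l - s₀.2) := by exact_mod_cast h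
    nlinarith
  · rw [heq]
    nlinarith [mul_nonneg (sub_nonneg.2 (hline s hs heq)) (sub_nonneg.2 hs₀.2.le)]

lemma halfspace_of_support {p q k ℓ l a x y : ℚ} (hp : p ≤ -1) (hk : 0 ≤ k) (hkℓ : k ≤ ℓ)
    (hl : 0 ≤ l) (hy : y ≤ l) (hedge : p * a + q * l = k) (hsupp : p * x + q * y ≤ k) :
    -l * x + (ℓ + a) * y ≤ l * ℓ := by
  have hly : 0 ≤ l - y := sub_nonneg.2 hy
  have key : -p * (-l * x + a * y) ≤ -p * (ℓ * (l - y)) :=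
    calc -p * (-l * x + a * y) = l * (p * x + q * y) - k * y := by rw [← hedge]; ring
      _ ≤ l * k - k * y := by gcongr
      _ = k * (l - y) := by ring
      _ ≤ ℓ * (l - y) := by gcongr
      _ ≤ -p * (ℓ * (l - y)) :=
        le_mul_of_one_le_left (mul_nonneg (hk.trans hkℓ) hly) (by linarith)
  nlinarith [le_of_mul_le_mul_left key (by linarith : 0 < -p)]

lemma sub_le_of_halfspaces {ℓ l a b x y : ℚ} (hℓ : 0 ≤ ℓ) (hl : 0 ≤ l) (hy : y ≤ -1)
    (h₁ : -l * x + (ℓ + a) * y ≤ l * ℓ) (h₂ : l * x + (ℓ - b) * y ≤ l * ℓ) :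
    b - a ≤ 2 * ℓ * (l + 1) := by
  have hsum : (b - a - 2 * ℓ) * -y ≤ 2 * l * ℓ := by linarith
  rcases le_or_gt (b - a - 2 * ℓ) 0 with h | h
  · nlinarith
  · nlinarith [mul_le_mul_of_nonneg_left (show 1 ≤ -y by linarith) h.le]

def frameZ (μ η s : ℤ × ℤ) : ℤ × ℤ := (pairZ μ s, pairZ η s)

def frameMap (μ η : ℤ × ℤ) : ℚ × ℚ →ₗ[ℚ] ℚ × ℚ := (pairQLin μ).prod (pairQLin η)

@[simp] lemma frameMap_apply (μ η : ℤ × ℤ) (x : ℚ × ℚ) :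
    frameMap μ η x = (pairQ μ x, pairQ η x) := rfl

lemma frameMap_toQ (μ η s : ℤ × ℤ) : frameMap μ η (toQ s) = toQ (frameZ μ η s) := by
  simp only [frameMap_apply, pairQ_toQ]
  rfl

lemma image_frameMap_convexHull (μ η : ℤ × ℤ) (S : Finset (ℤ × ℤ)) :
    frameMap μ η '' convexHull ℚ (toQ '' ↑S) = convexHull ℚ (toQ '' ↑(S.image (frameZ μ η))) := by
  rw [LinearMap.image_convexHull, Finset.coe_image, Set.image_image, Set.image_image]
  simp_rw [frameMap_toQ]

lemma pairQ_frameMap (μ η ν : ℤ × ℤ) (x : ℚ × ℚ) :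
    pairQ ν (frameMap μ η x) = pairQ (ν.1 • μ + ν.2 • η) x := by
  simp [pairQ]
  ring

section Unimodular

variable {μ η : ℤ × ℤ}

lemma frameZ_injective (hdet : IsUnit (μ.1 * η.2 - μ.2 * η.1)) :
    Function.Injective (frameZ μ η) := by
  intro p p' h
  simp only [frameZ, pairZ, Prod.mk.injEq] at h
  have hd := Int.isUnit_mul_self hdet
  ext
  · linear_combination (μ.1 * η.2 - μ.2 * η.1) * (η.2 * h.1 - μ.2 * h.2) - (p.1 - p'.1) * hd
  · linear_combination (μ.1 * η.2 - μ.2 * η.1) * (μ.1 * h.2 - η.1 * h.1) - (p.2 - p'.2) * hd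

lemma smul_add_smul_ne_zero (hdet : IsUnit (μ.1 * η.2 - μ.2 * η.1)) {ν : ℤ × ℤ} (hν : ν ≠ 0) :
    ν.1 • μ + ν.2 • η ≠ 0 := by
  intro h
  have h1 := congrArg Prod.fst h
  have h2 := congrArg Prod.snd h
  simp only [Prod.fst_add, Prod.snd_add, Prod.smul_fst, Prod.smul_snd, smul_eq_mul,
    Prod.fst_zero, Prod.snd_zero] at h1 h2
  have hd := Int.isUnit_mul_self hdet
  refine hν (Prod.ext ?_ ?_)
  · show ν.1 = 0
    linear_combination (μ.1 * η.2 - μ.2 * η.1) * (η.2 * h1 - η.1 * h2) - ν.1 * hd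
  · show ν.2 = 0
    linear_combination (μ.1 * η.2 - μ.2 * η.1) * (μ.1 * h2 - μ.2 * h1) - ν.2 * hd

lemma isCoprime_smul_add_smul (hdet : IsUnit (μ.1 * η.2 - μ.2 * η.1)) {ν : ℤ × ℤ}
    (hν : IsCoprime ν.1 ν.2) : IsCoprime (ν.1 • μ + ν.2 • η).1 (ν.1 • μ + ν.2 • η).2 := by
  obtain ⟨u, v, huv⟩ := hν
  have hd := Int.isUnit_mul_self hdet
  refine ⟨(μ.1 * η.2 - μ.2 * η.1) * (u * η.2 - v * μ.2),
    (μ.1 * η.2 - μ.2 * η.1) * (v * μ.1 - u * η.1), ?_⟩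
  simp only [Prod.fst_add, Prod.snd_add, Prod.smul_fst, Prod.smul_snd, smul_eq_mul]
  linear_combination (μ.1 * η.2 - μ.2 * η.1) ^ 2 * huv + hd

lemma IsFacetWith.of_image_frameMap (hdet : IsUnit (μ.1 * η.2 - μ.2 * η.1))
    {Q F : Set (ℚ × ℚ)} {ν : ℤ × ℤ} {k : ℤ} (h : IsFacetWith (frameMap μ η '' Q) ν k F) :
    IsFacetWith Q (ν.1 • μ + ν.2 • η) k {x ∈ Q | pairQ (ν.1 • μ + ν.2 • η) x = k} := by
  obtain ⟨hν, hk, hsupp, rfl, _, ⟨⟨x, hx, rfl⟩, hxk⟩, _, ⟨⟨y, hy, rfl⟩, hyk⟩, hxy⟩ := h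
  refine ⟨Int.isCoprime_iff_gcd_eq_one.mp
      (isCoprime_smul_add_smul hdet (Int.isCoprime_iff_gcd_eq_one.mpr hν)), hk,
    fun z hz => ?_, rfl, x, ⟨hx, ?_⟩, y, ⟨hy, ?_⟩, fun hxy' => hxy (congrArg _ hxy')⟩
  · rw [← pairQ_frameMap]; exact hsupp _ ⟨z, hz, rfl⟩
  · rwa [← pairQ_frameMap]
  · rwa [← pairQ_frameMap]

lemma MeetsOpenHalfplanes.image_frameMap (hdet : IsUnit (μ.1 * η.2 - μ.2 * η.1))
    {Q : Set (ℚ × ℚ)} (hQ : MeetsOpenHalfplanes Q) : MeetsOpenHalfplanes (frameMap μ η '' Q) := by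
  intro ν hν
  obtain ⟨x, hx, hpos⟩ := hQ _ (smul_add_smul_ne_zero hdet hν)
  exact ⟨_, ⟨x, hx, rfl⟩, by rwa [pairQ_frameMap]⟩

lemma LocalIndexLE.image_frameMap (hdet : IsUnit (μ.1 * η.2 - μ.2 * η.1))
    {Q : Set (ℚ × ℚ)} {ℓ : ℤ} (hQ : LocalIndexLE Q ℓ) : LocalIndexLE (frameMap μ η '' Q) ℓ :=
  fun _ _ _ hF => hQ _ _ _ (hF.of_image_frameMap hdet)

lemma latticeCount_le_ncard_Icc (hdet : IsUnit (μ.1 * η.2 - μ.2 * η.1)) {F : Set (ℚ × ℚ)}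
    {l a b : ℤ} (hF : ∀ p, toQ p ∈ F → pairZ η p = l ∧ a ≤ pairZ μ p ∧ pairZ μ p ≤ b) :
    latticeCount F ≤ (Set.Icc a b).ncard :=
  Set.ncard_le_ncard_of_injOn (pairZ μ) (fun p hp => (hF p hp).2)
    (fun p hp p' hp' h => frameZ_injective hdet (Prod.ext h ((hF p hp).1.trans (hF p' hp').1.symm)))
    (Set.finite_Icc a b)

end Unimodular

lemma exists_endpoints_on_line (S : Finset (ℤ × ℤ)) {l : ℤ} (hne : ∃ s ∈ S, s.2 = l) :
    ∃ a b : ℤ, (a, l) ∈ S ∧ (b, l) ∈ S ∧ ∀ s ∈ S, s.2 = l → a ≤ s.1 ∧ s.1 ≤ b := by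
  have hne' : (S.filter (·.2 = l)).Nonempty :=
    let ⟨s, hs, h⟩ := hne; ⟨s, Finset.mem_filter.mpr ⟨hs, h⟩⟩
  obtain ⟨s, hs, hmin⟩ := (S.filter (·.2 = l)).exists_min_image Prod.fst hne'
  obtain ⟨t, ht, hmax⟩ := (S.filter (·.2 = l)).exists_max_image Prod.fst hne'
  rw [Finset.mem_filter] at hs ht
  refine ⟨s.1, t.1, by simpa [← hs.2] using hs.1, by simpa [← ht.2] using ht.1, fun r hr hrl => ?_⟩
  exact ⟨hmin r (Finset.mem_filter.mpr ⟨hr, hrl⟩), hmax r (Finset.mem_filter.mpr ⟨hr, hrl⟩)⟩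

section Polygon

variable {S : Finset (ℤ × ℤ)} {Q F : Set (ℚ × ℚ)} {η : ℤ × ℤ} {ℓ l : ℤ}

lemma exists_mem_snd_neg (hS : Q = convexHull ℚ (toQ '' ↑S)) (hQ : MeetsOpenHalfplanes Q) :
    ∃ s ∈ S, s.2 < 0 := by
  obtain ⟨x, hx, hpos⟩ := hQ (0, -1) (by simp)
  obtain ⟨s, hs, hlt⟩ := exists_lt_pairZ_of_mem_convexHull (hS ▸ hx) hpos
  exact ⟨s, hs, by simp [pairZ] at hlt; omega⟩

lemma exists_mem_snd_eq (hS : Q = convexHull ℚ (toQ '' ↑S)) (htop : ∀ s ∈ S, s.2 ≤ l)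
    {x : ℚ × ℚ} (hx : x ∈ Q) (hxl : x.2 = l) : ∃ s ∈ S, s.2 = l := by
  obtain ⟨s, hs, hsl⟩ := exists_lt_pairZ_of_mem_convexHull (η := (0, 1)) (c := l - 1) (hS ▸ hx)
    (by simp [pairQ, hxl])
  have : l - 1 < s.2 := by simpa [pairZ] using (by exact_mod_cast hsl : l - 1 < pairZ (0, 1) s)
  exact ⟨s, hs, le_antisymm (htop s hs) (by omega)⟩

lemma isFacetWith_of_support (hS : Q = convexHull ℚ (toQ '' ↑S))
    (hQ : MeetsOpenHalfplanes Q) {n A B : ℤ × ℤ} (hn : Int.gcd n.1 n.2 = 1)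
    (hsupp : ∀ s ∈ S, pairZ n s ≤ pairZ n A) (hA : toQ A ∈ Q) (hB : toQ B ∈ Q) (hAB : A ≠ B)
    (hBA : pairZ n B = pairZ n A) :
    IsFacetWith Q n (pairZ n A) {x ∈ Q | pairQ n x = pairZ n A} := by
  have hsuppQ : ∀ x ∈ Q, pairQ n x ≤ pairZ n A := fun x hx =>
    pairQ_le_of_mem_convexHull (by rintro _ ⟨s, hs, rfl⟩; exact_mod_cast by simpa using hsupp s hs)
      (hS ▸ hx)
  obtain ⟨x, hx, hpos⟩ := hQ n (by rintro rfl; simp at hn)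
  refine ⟨hn, ?_, hsuppQ, rfl, toQ A, ⟨hA, by simp⟩, toQ B, ⟨hB, by simp [hBA]⟩,
    toQ_injective.ne hAB⟩
  exact_mod_cast hpos.trans_le (hsuppQ x hx)

lemma exists_isFacetWith_of_support (hS : Q = convexHull ℚ (toQ '' ↑S))
    (hQ : MeetsOpenHalfplanes Q) {n A B : ℤ × ℤ} (hn : n ≠ 0)
    (hsupp : ∀ s ∈ S, pairZ n s ≤ pairZ n A) (hA : toQ A ∈ Q) (hB : toQ B ∈ Q) (hAB : A ≠ B)
    (hBA : pairZ n B = pairZ n A) :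
    ∃ g : ℤ, 0 < g ∧ ∃ n' : ℤ × ℤ, n = g • n' ∧
      IsFacetWith Q n' (pairZ n' A) {x ∈ Q | pairQ n' x = pairZ n' A} := by
  obtain ⟨g, p, q, hg, hpq, h1, h2⟩ := Int.exists_gcd_one' (m := n.1) (n := n.2)
    (Int.gcd_pos_iff.mpr (by contrapose! hn; exact Prod.ext hn.1 hn.2))
  have hg' : (0 : ℤ) < g := by exact_mod_cast hg
  have hpair : ∀ s, pairZ n s = g * pairZ (p, q) s := fun s => by simp [pairZ, h1, h2]; ring
  refine ⟨g, hg', (p, q), Prod.ext (by simp [h1, mul_comm]) (by simp [h2, mul_comm]), ?_⟩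
  refine isFacetWith_of_support hS hQ hpq (fun s hs => ?_) hA hB hAB ?_
  · exact le_of_mul_le_mul_left (by simpa only [hpair] using hsupp s hs) hg'
  · exact mul_left_cancel₀ hg'.ne' (by simpa only [hpair] using hBA)

lemma exists_facet_at_left_end (hS : Q = convexHull ℚ (toQ '' ↑S)) (hQ : MeetsOpenHalfplanes Q)
    (hl : 0 < l) (htop : ∀ s ∈ S, s.2 ≤ l) {a : ℤ} (ha : toQ (a, l) ∈ Q)
    (hline : ∀ s ∈ S, s.2 = l → a ≤ s.1) :
    ∃ n : ℤ × ℤ, n.1 < 0 ∧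
      IsFacetWith Q n (pairZ n (a, l)) {x ∈ Q | pairQ n x = pairZ n (a, l)} := by
  obtain ⟨s₀, hs₀, hs₀l, hsupp⟩ := exists_support_at_left_end S htop hline
    (let ⟨s, hs, h⟩ := exists_mem_snd_neg hS hQ; ⟨s, hs, h.trans hl⟩)
  obtain ⟨g, hg, n, hn, hF⟩ := exists_isFacetWith_of_support hS hQ (B := s₀)
    (by simp [Prod.ext_iff]; omega) hsupp ha (hS ▸ subset_convexHull ℚ _ ⟨s₀, hs₀, rfl⟩)
    (fun h => (h ▸ hs₀l).false) (by simp only [pairZ]; ring)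
  refine ⟨n, ?_, hF⟩
  have h1 : s₀.2 - l = g * n.1 := congrArg Prod.fst hn
  nlinarith

theorem halfspace_left (hS : Q = convexHull ℚ (toQ '' ↑S)) (hQ : MeetsOpenHalfplanes Q)
    (hind : LocalIndexLE Q ℓ) (hl : 0 < l) (htop : ∀ s ∈ S, s.2 ≤ l) {a : ℤ}
    (ha : toQ (a, l) ∈ Q) (hline : ∀ s ∈ S, s.2 = l → a ≤ s.1) :
    ∀ v ∈ Q, -(l : ℚ) * v.1 + ((ℓ : ℚ) + (a : ℚ)) * v.2 ≤ (l : ℚ) * (ℓ : ℚ) := by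
  obtain ⟨n, hn, hF⟩ := exists_facet_at_left_end hS hQ hl htop ha hline
  intro v hv
  have hv2 : v.2 ≤ l := by
    simpa [pairQ] using pairQ_le_of_mem_convexHull (η := (0, 1)) (c := l)
      (by rintro _ ⟨s, hs, rfl⟩; simpa [pairZ] using htop s hs) (hS ▸ hv)
  refine halfspace_of_support (p := n.1) (q := n.2) (k := pairZ n (a, l))
    (by exact_mod_cast Int.le_sub_one_of_lt hn) (by exact_mod_cast hF.2.1.le)
    (by exact_mod_cast hind _ _ _ hF) (by exact_mod_cast hl.le) hv2 (by simp [pairZ])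
    (hF.2.2.1 v hv)

theorem halfspace_right (hS : Q = convexHull ℚ (toQ '' ↑S)) (hQ : MeetsOpenHalfplanes Q)
    (hind : LocalIndexLE Q ℓ) (hl : 0 < l) (htop : ∀ s ∈ S, s.2 ≤ l) {b : ℤ}
    (hb : toQ (b, l) ∈ Q) (hline : ∀ s ∈ S, s.2 = l → s.1 ≤ b) :
    ∀ v ∈ Q, (l : ℚ) * v.1 + ((ℓ : ℚ) - (b : ℚ)) * v.2 ≤ (l : ℚ) * (ℓ : ℚ) := by
  have hdet : IsUnit ((-1, 0).1 * (0, 1).2 - (-1, 0).2 * (0, 1).1 : ℤ) := by norm_num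
  have hR : ∀ x, frameMap (-1, 0) (0, 1) x = (-x.1, x.2) := fun x => by simp [pairQ]
  intro v hv
  have := halfspace_left (S := S.image (frameZ (-1, 0) (0, 1))) (a := -b)
    (by rw [hS, image_frameMap_convexHull]) (hQ.image_frameMap hdet) (hind.image_frameMap hdet) hl
    (Finset.forall_mem_image.mpr fun s hs => by simpa [frameZ, pairZ] using htop s hs)
    ⟨toQ (b, l), hb, by simp [hR, toQ]⟩
    (Finset.forall_mem_image.mpr fun s hs h => by
      simpa [frameZ, pairZ] using hline s hs (by simpa [frameZ, pairZ] using h))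
    _ ⟨v, hv, rfl⟩
  rw [hR] at this
  push_cast at this
  linarith

theorem top_edge_width (hS : Q = convexHull ℚ (toQ '' ↑S)) (hQ : MeetsOpenHalfplanes Q)
    (hind : LocalIndexLE Q ℓ) (hl : 0 < l) (hℓ : 0 ≤ ℓ) (htop : ∀ s ∈ S, s.2 ≤ l) {a b : ℤ}
    (ha : (a, l) ∈ S) (hb : (b, l) ∈ S) (hline : ∀ s ∈ S, s.2 = l → a ≤ s.1 ∧ s.1 ≤ b) :
    b - a ≤ 2 * ℓ * (l + 1) ∧ ∀ x ∈ Q, x.2 = l → a ≤ x.1 ∧ x.1 ≤ b := by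
  have hmem : ∀ s ∈ S, toQ s ∈ Q := fun s hs => hS ▸ subset_convexHull ℚ _ ⟨s, hs, rfl⟩
  have hleft := halfspace_left hS hQ hind hl htop (hmem _ ha) fun s hs h => (hline s hs h).1
  have hright := halfspace_right hS hQ hind hl htop (hmem _ hb) fun s hs h => (hline s hs h).2
  have hlQ : (0 : ℚ) < l := by exact_mod_cast hl
  obtain ⟨z, hz, hz2⟩ := exists_mem_snd_neg hS hQ
  refine ⟨?_, fun x hx hx2 => ?_⟩
  · have := sub_le_of_halfspaces (by exact_mod_cast hℓ) hlQ.le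
      (by simpa [toQ] using (Int.cast_le (R := ℚ)).mpr (Int.le_sub_one_of_lt hz2))
      (hleft _ (hmem z hz)) (hright _ (hmem z hz))
    exact_mod_cast this
  · have h₁ := hleft x hx
    have h₂ := hright x hx
    rw [hx2] at h₁ h₂
    constructor <;> nlinarith

theorem latticeCount_le_of_isFacetWith (hS : Q = convexHull ℚ (toQ '' ↑S))
    (hQ : MeetsOpenHalfplanes Q) (hind : LocalIndexLE Q ℓ) (hF : IsFacetWith Q η l F) :
    (latticeCount F : ℤ) ≤ 2 * ℓ * (l + 1) + 1 := by
  have hlℓ : l ≤ ℓ := hind _ _ _ hF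
  obtain ⟨hprim, hl, hsupp, rfl, x, ⟨hxQ, hxl⟩, -⟩ := hF
  obtain ⟨μ, hdet⟩ : ∃ μ : ℤ × ℤ, IsUnit (μ.1 * η.2 - μ.2 * η.1) := by
    obtain ⟨u, v, huv⟩ := Int.isCoprime_iff_gcd_eq_one.mpr hprim
    exact ⟨(v, -u), by simp only [neg_mul, sub_neg_eq_add]; rw [add_comm, huv]; exact isUnit_one⟩
  set T := frameMap μ η
  set S₁ := S.image (frameZ μ η)
  have hS₁ : T '' Q = convexHull ℚ (toQ '' ↑S₁) := by rw [hS, image_frameMap_convexHull]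
  have hmem : ∀ s ∈ S, toQ s ∈ Q := fun s hs => hS ▸ subset_convexHull ℚ _ ⟨s, hs, rfl⟩
  have htop : ∀ s ∈ S₁, s.2 ≤ l := Finset.forall_mem_image.mpr fun s hs => by
    exact_mod_cast (pairQ_toQ η s ▸ hsupp _ (hmem s hs))
  obtain ⟨a, b, ha, hb, hline⟩ :=
    exists_endpoints_on_line S₁ (exists_mem_snd_eq hS₁ htop ⟨x, hxQ, rfl⟩ hxl)
  obtain ⟨hwidth, hIcc⟩ := top_edge_width hS₁ (hQ.image_frameMap hdet)
    (hind.image_frameMap hdet) hl (hl.le.trans hlℓ) htop ha hb hline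
  have hcount : latticeCount {x ∈ Q | pairQ η x = l} ≤ (Set.Icc a b).ncard :=
    latticeCount_le_ncard_Icc hdet fun p ⟨hpQ, hpl⟩ => by
      have := hIcc (T (toQ p)) ⟨_, hpQ, rfl⟩ (by simpa [T] using hpl)
      simp only [T, frameMap_apply, pairQ_toQ] at this hpl
      exact ⟨by exact_mod_cast hpl, by exact_mod_cast this.1, by exact_mod_cast this.2⟩
  rw [← Finset.coe_Icc, Set.ncard_coe_finset, Int.card_Icc] at hcount
  have : 0 ≤ 2 * ℓ * (l + 1) := by nlinarith
  omega

lemma normal_eq_of_mem_horizontal {a b : ℤ} (hF : IsFacetWith Q η l F) (ha : toQ (a, l) ∈ F)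
    (hb : toQ (b, l) ∈ F) (hab : a ≠ b) : η = (0, 1) := by
  obtain ⟨-, hl, -, rfl, -⟩ := hF
  have ha' : η.1 * a + η.2 * l = l := by exact_mod_cast (pairQ_toQ η _ ▸ ha.2)
  have hb' : η.1 * b + η.2 * l = l := by exact_mod_cast (pairQ_toQ η _ ▸ hb.2)
  have h1 : η.1 = 0 :=
    (mul_eq_zero.mp (by linear_combination ha' - hb' : η.1 * (a - b) = 0)).resolve_right
      (sub_ne_zero.mpr hab)
  have h2 : η.2 = 1 := by
    have := (mul_eq_zero.mp (by rw [h1] at ha'; linear_combination ha' : (η.2 - 1) * l = 0))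
    omega
  exact Prod.ext h1 h2

theorem halfspaces_of_facet_eq_segment (hS : Q = convexHull ℚ (toQ '' ↑S))
    (hQ : MeetsOpenHalfplanes Q) (hind : LocalIndexLE Q ℓ) (hF : IsFacetWith Q η l F) {a b : ℤ}
    (hab : a < b) (hFab : F = convexHull ℚ {toQ (a, l), toQ (b, l)}) :
    ∀ v ∈ Q, -(l : ℚ) * v.1 + ((ℓ : ℚ) + (a : ℚ)) * v.2 ≤ (l : ℚ) * (ℓ : ℚ) ∧
      (l : ℚ) * v.1 + ((ℓ : ℚ) - (b : ℚ)) * v.2 ≤ (l : ℚ) * (ℓ : ℚ) := by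
  have haF : toQ (a, l) ∈ F := hFab ▸ subset_convexHull ℚ _ (by simp)
  have hbF : toQ (b, l) ∈ F := hFab ▸ subset_convexHull ℚ _ (by simp)
  obtain rfl := normal_eq_of_mem_horizontal hF haF hbF hab.ne
  obtain ⟨-, hl, hsupp, rfl, -⟩ := hF
  have hmem : ∀ s ∈ S, toQ s ∈ Q := fun s hs => hS ▸ subset_convexHull ℚ _ ⟨s, hs, rfl⟩
  have htop : ∀ s ∈ S, s.2 ≤ l := fun s hs => by simpa [pairZ] using hsupp _ (hmem s hs)
  have hseg : ∀ s ∈ S, s.2 = l → a ≤ s.1 ∧ s.1 ≤ b := by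
    intro s hs hsl
    have hsF : toQ s ∈ convexHull ℚ {toQ (a, l), toQ (b, l)} :=
      hFab ▸ ⟨hmem s hs, by simp [pairZ, hsl]⟩
    have h₁ := pairQ_le_of_mem_convexHull (η := (-1, 0)) (c := -a)
      (by simp [pairQ, toQ]; exact_mod_cast hab.le) hsF
    have h₂ := pairQ_le_of_mem_convexHull (η := (1, 0)) (c := b)
      (by simp [pairQ, toQ]; exact_mod_cast hab.le) hsF
    simp [pairZ] at h₁ h₂
    exact ⟨by exact_mod_cast h₁, by exact_mod_cast h₂⟩
  exact fun v hv =>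
    ⟨halfspace_left hS hQ hind hl htop haF.1 (fun s hs h => (hseg s hs h).1) v hv,
      halfspace_right hS hQ hind hl htop hbF.1 (fun s hs h => (hseg s hs h).2) v hv⟩

end Polygon

/-- If `Q` is an LDP-polygon of index `ℓ` and `F` a facet of local index `l`, then
`|F ∩ ℤ²| ≤ 2ℓ(l + 1) + 1`; moreover, if `F = conv{(a,l),(b,l)}` with
`−l < a ≤ 0 < b`, then `Q` satisfies the two stated linear inequalities. -/
theorem facet_bound_and_halfspaces
    (Q F : Set (ℚ × ℚ)) (η : ℤ × ℤ) (ℓ l : ℤ)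
    (hQ : IsLDPPolygon Q) (hℓ : HasIndex Q ℓ) (hF : IsFacetWith Q η l F) :
    (latticeCount F : ℤ) ≤ 2 * ℓ * (l + 1) + 1 ∧
    ∀ a b : ℤ, -l < a → a ≤ 0 → 0 < b →
      F = convexHull ℚ {toQ (a, l), toQ (b, l)} →
      ∀ v ∈ Q, -(l : ℚ) * v.1 + ((ℓ : ℚ) + (a : ℚ)) * v.2 ≤ (l : ℚ) * (ℓ : ℚ) ∧
        (l : ℚ) * v.1 + ((ℓ : ℚ) - (b : ℚ)) * v.2 ≤ (l : ℚ) * (ℓ : ℚ) := by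
  obtain ⟨⟨⟨⟨S, hS⟩, -⟩, h0⟩, -⟩ := hQ
  have hopen := meetsOpenHalfplanes_of_zero_mem_interior h0
  have hind : LocalIndexLE Q ℓ := fun F ν k h => Int.le_of_dvd hℓ.1 (hℓ.2.1 F ν k h)
  exact ⟨latticeCount_le_of_isFacetWith hS hopen hind hF,
    fun a b _ ha hb hFab => halfspaces_of_facet_eq_segment hS hopen hind hF (by omega) hFab⟩
end
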